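/- arXiv:1106.0812 — 2 statements merged into one kernel-verified Lean document; each statement's English description precedes it below -/
import Mathlib

section
/- Let φ : [0,l] → ℂ be continuously differentiable and let S₂ ∈ B(L²(0,l)) be defined by (S₂f)(x) = -∫₀ˣ φ'(x-t) conj(φ(0)) f(t) dt. Then A S₂ - S₂ A* is the rank-one operator f ↦ i (φ(x) - φ(0)) conj(φ(0)) ∫₀ˡ f(t) dt, where (Af)(x) = -i ∫₀ˣ f(t) dt. -/
open MeasureTheory Set

noncomputable section

namespace S2IdAux

open Function

lemma integrable_snd_comp {μ ν : Measure ℝ} [IsFiniteMeasure μ] [SFinite ν]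
    {h : ℝ → ℝ} (hh : Integrable h ν) :
    Integrable (fun p : ℝ × ℝ => h p.2) (μ.prod ν) := by
  have hmap : Measure.map Prod.snd (μ.prod ν) = (μ Set.univ) • ν :=
    Measure.map_snd_prod
  have hsm : Integrable h (Measure.map Prod.snd (μ.prod ν)) := by
    rw [hmap]
    exact hh.smul_measure (measure_ne_top μ _)
  exact (integrable_map_measure hsm.aestronglyMeasurable
    measurable_snd.aemeasurable).mp hsm

lemma claim1 {l x : ℝ} (hx : x ∈ Ioo 0 l) {K' Φ : ℝ → ℂ} (hK : Continuous K')
    {M : ℝ} (hM : ∀ v, ‖K' v‖ ≤ M)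
    (hftc : ∀ a b : ℝ, 0 ≤ a → a ≤ b → b ≤ l → (∫ v in a..b, K' v) = Φ b - Φ a)
    {g : ℝ → ℂ} (hg : IntegrableOn g (Ioo 0 l)) :
    (∫ u in Ioo 0 x, ∫ t in Ioo 0 u, K' (u - t) * g t)
      = ∫ t in Ioo 0 x, (Φ (x - t) - Φ 0) * g t := by
  obtain ⟨hx0, hxl⟩ := hx
  have hgx : IntegrableOn g (Ioo 0 x) := hg.mono_set (Ioo_subset_Ioo_right hxl.le)
  have hM0 : 0 ≤ M := le_trans (norm_nonneg _) (hM 0)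
  set F : ℝ → ℝ → ℂ := fun u t => if t < u then K' (u - t) * g t else 0 with hF
  have key : ∀ u ∈ Ioo (0:ℝ) x,
      (∫ t in Ioo 0 u, K' (u - t) * g t) = ∫ t in Ioo 0 x, F u t := by
    intro u hu
    have h1 : ∀ t ∈ Ioo (0:ℝ) x,
        F u t = (Ioo (0:ℝ) u).indicator (fun t => K' (u - t) * g t) t := by
      intro t ht
      by_cases h : t < u
      · have hm : t ∈ Ioo (0:ℝ) u := ⟨ht.1, h⟩
        simp [hF, h, Set.indicator_of_mem hm]
      · have hm : t ∉ Ioo (0:ℝ) u := fun hm => h hm.2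
        simp [hF, h, Set.indicator_of_notMem hm]
    rw [setIntegral_congr_fun measurableSet_Ioo h1,
      setIntegral_indicator measurableSet_Ioo,
      Set.inter_eq_self_of_subset_right (Ioo_subset_Ioo_right hu.2.le)]
  have key2 : ∀ t ∈ Ioo (0:ℝ) x,
      (∫ u in Ioo 0 x, F u t) = (∫ u in Ioo t x, K' (u - t)) * g t := by
    intro t ht
    have h1 : ∀ u ∈ Ioo (0:ℝ) x,
        F u t = (Ioo t x).indicator (fun u => K' (u - t) * g t) u := by
      intro u hu
      by_cases h : t < u
      · have hm : u ∈ Ioo t x := ⟨h, hu.2⟩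
        simp [hF, h, Set.indicator_of_mem hm]
      · have hm : u ∉ Ioo t x := fun hm => h hm.1
        simp [hF, h, Set.indicator_of_notMem hm]
    rw [setIntegral_congr_fun measurableSet_Ioo h1,
      setIntegral_indicator measurableSet_Ioo,
      Set.inter_eq_self_of_subset_right (Ioo_subset_Ioo ht.1.le le_rfl),
      integral_mul_const]
  have inner_eval : ∀ t ∈ Ioo (0:ℝ) x,
      (∫ u in Ioo t x, K' (u - t)) = Φ (x - t) - Φ 0 := by
    intro t ht
    have h1 : (∫ u in Ioo t x, K' (u - t)) = ∫ u in t..x, K' (u - t) := by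
      rw [intervalIntegral.integral_of_le ht.2.le, integral_Ioc_eq_integral_Ioo]
    rw [h1, intervalIntegral.integral_comp_sub_right, sub_self]
    exact hftc 0 (x - t) le_rfl (by linarith [ht.1, ht.2]) (by linarith [ht.1, hxl])
  have hgsnd : AEStronglyMeasurable (fun p : ℝ × ℝ => g p.2)
      ((volume.restrict (Ioo 0 x)).prod (volume.restrict (Ioo 0 x))) :=
    hgx.aestronglyMeasurable.comp_snd
  have hFae : AEStronglyMeasurable (uncurry F)
      ((volume.restrict (Ioo 0 x)).prod (volume.restrict (Ioo 0 x))) := by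
    have h1 : AEStronglyMeasurable (fun p : ℝ × ℝ => K' (p.1 - p.2) * g p.2)
        ((volume.restrict (Ioo 0 x)).prod (volume.restrict (Ioo 0 x))) :=
      ((hK.comp (continuous_fst.sub continuous_snd)).aestronglyMeasurable).mul hgsnd
    have heq : uncurry F = Set.indicator {p : ℝ × ℝ | p.2 < p.1}
        (fun p => K' (p.1 - p.2) * g p.2) := by
      ext p
      by_cases h : p.2 < p.1
      · simp [uncurry, hF, h, Set.indicator_of_mem (show p ∈ {p : ℝ × ℝ | p.2 < p.1} from h)]
      · simp [uncurry, hF, h, Set.indicator_of_notMem (show p ∉ {p : ℝ × ℝ | p.2 < p.1} from h)]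
    rw [heq]
    exact h1.indicator (measurableSet_lt measurable_snd measurable_fst)
  have hFint : Integrable (uncurry F)
      ((volume.restrict (Ioo 0 x)).prod (volume.restrict (Ioo 0 x))) := by
    refine (integrable_snd_comp (hgx.norm.const_mul M)).mono' hFae ?_
    refine Filter.Eventually.of_forall fun p => ?_
    by_cases h : p.2 < p.1
    · simp only [uncurry, hF, if_pos h, norm_mul]
      exact mul_le_mul_of_nonneg_right (hM _) (norm_nonneg _)
    · simp only [uncurry, hF, if_neg h, norm_zero]
      positivity
  calc (∫ u in Ioo 0 x, ∫ t in Ioo 0 u, K' (u - t) * g t)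
      = ∫ u in Ioo 0 x, ∫ t in Ioo 0 x, F u t :=
        setIntegral_congr_fun measurableSet_Ioo key
    _ = ∫ t in Ioo 0 x, ∫ u in Ioo 0 x, F u t := integral_integral_swap hFint
    _ = ∫ t in Ioo 0 x, (∫ u in Ioo t x, K' (u - t)) * g t :=
        setIntegral_congr_fun measurableSet_Ioo key2
    _ = ∫ t in Ioo 0 x, (Φ (x - t) - Φ 0) * g t :=
        setIntegral_congr_fun measurableSet_Ioo fun t ht => by rw [inner_eval t ht]

lemma claim2 {l x : ℝ} (hx : x ∈ Ioo 0 l) {K' Φ : ℝ → ℂ} (hK : Continuous K')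
    {M : ℝ} (hM : ∀ v, ‖K' v‖ ≤ M)
    (hftc : ∀ a b : ℝ, 0 ≤ a → a ≤ b → b ≤ l → (∫ v in a..b, K' v) = Φ b - Φ a)
    {g : ℝ → ℂ} (hg : IntegrableOn g (Ioo 0 l)) :
    (∫ t in Ioo 0 x, K' (x - t) * ∫ s in Ioo t l, g s)
      = ∫ s in Ioo 0 l, (Φ x - Φ (x - min s x)) * g s := by
  obtain ⟨hx0, hxl⟩ := hx
  have hM0 : 0 ≤ M := le_trans (norm_nonneg _) (hM 0)
  set F : ℝ → ℝ → ℂ := fun t s => if t < s then K' (x - t) * g s else 0 with hF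
  have key : ∀ t ∈ Ioo (0:ℝ) x,
      (K' (x - t) * ∫ s in Ioo t l, g s) = ∫ s in Ioo 0 l, F t s := by
    intro t ht
    have h1 : ∀ s ∈ Ioo (0:ℝ) l,
        F t s = (Ioo t l).indicator (fun s => K' (x - t) * g s) s := by
      intro s hs
      by_cases h : t < s
      · have hm : s ∈ Ioo t l := ⟨h, hs.2⟩
        simp [hF, h, Set.indicator_of_mem hm]
      · have hm : s ∉ Ioo t l := fun hm => h hm.1
        simp [hF, h, Set.indicator_of_notMem hm]
    rw [setIntegral_congr_fun measurableSet_Ioo h1,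
      setIntegral_indicator measurableSet_Ioo,
      Set.inter_eq_self_of_subset_right (Ioo_subset_Ioo ht.1.le le_rfl),
      integral_const_mul]
  have key2 : ∀ s ∈ Ioo (0:ℝ) l,
      (∫ t in Ioo 0 x, F t s) = (∫ t in Ioo 0 (min s x), K' (x - t)) * g s := by
    intro s hs
    have h1 : ∀ t ∈ Ioo (0:ℝ) x,
        F t s = (Ioo 0 (min s x)).indicator (fun t => K' (x - t) * g s) t := by
      intro t ht
      by_cases h : t < s
      · have hm : t ∈ Ioo 0 (min s x) := ⟨ht.1, lt_min h ht.2⟩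
        simp [hF, h, Set.indicator_of_mem hm]
      · have hm : t ∉ Ioo 0 (min s x) := fun hm => h (lt_of_lt_of_le hm.2 (min_le_left _ _))
        simp [hF, h, Set.indicator_of_notMem hm]
    rw [setIntegral_congr_fun measurableSet_Ioo h1,
      setIntegral_indicator measurableSet_Ioo,
      Set.inter_eq_self_of_subset_right (Ioo_subset_Ioo le_rfl (min_le_right _ _)),
      integral_mul_const]
  have inner_eval : ∀ s ∈ Ioo (0:ℝ) l,
      (∫ t in Ioo 0 (min s x), K' (x - t)) = Φ x - Φ (x - min s x) := by
    intro s hs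
    have hm0 : (0:ℝ) ≤ min s x := le_min hs.1.le hx0.le
    have h1 : (∫ t in Ioo 0 (min s x), K' (x - t)) = ∫ t in (0:ℝ)..(min s x), K' (x - t) := by
      rw [intervalIntegral.integral_of_le hm0, integral_Ioc_eq_integral_Ioo]
    rw [h1, intervalIntegral.integral_comp_sub_left, sub_zero]
    exact hftc (x - min s x) x (by simp [min_le_right s x]) (by simp [hm0]) hxl.le
  have hgsnd : AEStronglyMeasurable (fun p : ℝ × ℝ => g p.2)
      ((volume.restrict (Ioo 0 x)).prod (volume.restrict (Ioo 0 l))) :=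
    hg.aestronglyMeasurable.comp_snd
  have hFae : AEStronglyMeasurable (Function.uncurry F)
      ((volume.restrict (Ioo 0 x)).prod (volume.restrict (Ioo 0 l))) := by
    have h1 : AEStronglyMeasurable (fun p : ℝ × ℝ => K' (x - p.1) * g p.2)
        ((volume.restrict (Ioo 0 x)).prod (volume.restrict (Ioo 0 l))) :=
      ((hK.comp (continuous_const.sub continuous_fst)).aestronglyMeasurable).mul hgsnd
    have heq : Function.uncurry F = Set.indicator {p : ℝ × ℝ | p.1 < p.2}
        (fun p => K' (x - p.1) * g p.2) := by
      ext p
      by_cases h : p.1 < p.2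
      · simp [uncurry, hF, h, Set.indicator_of_mem (show p ∈ {p : ℝ × ℝ | p.1 < p.2} from h)]
      · simp [uncurry, hF, h, Set.indicator_of_notMem (show p ∉ {p : ℝ × ℝ | p.1 < p.2} from h)]
    rw [heq]
    exact h1.indicator (measurableSet_lt measurable_fst measurable_snd)
  have hFint : Integrable (Function.uncurry F)
      ((volume.restrict (Ioo 0 x)).prod (volume.restrict (Ioo 0 l))) := by
    refine (integrable_snd_comp (hg.norm.const_mul M)).mono' hFae ?_
    refine Filter.Eventually.of_forall fun p => ?_
    by_cases h : p.1 < p.2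
    · simp only [uncurry, hF, if_pos h, norm_mul]
      exact mul_le_mul_of_nonneg_right (hM _) (norm_nonneg _)
    · simp only [uncurry, hF, if_neg h, norm_zero]
      positivity
  calc (∫ t in Ioo 0 x, K' (x - t) * ∫ s in Ioo t l, g s)
      = ∫ t in Ioo 0 x, ∫ s in Ioo 0 l, F t s :=
        setIntegral_congr_fun measurableSet_Ioo key
    _ = ∫ s in Ioo 0 l, ∫ t in Ioo 0 x, F t s := integral_integral_swap hFint
    _ = ∫ s in Ioo 0 l, (∫ t in Ioo 0 (min s x), K' (x - t)) * g s :=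
        setIntegral_congr_fun measurableSet_Ioo key2
    _ = ∫ s in Ioo 0 l, (Φ x - Φ (x - min s x)) * g s :=
        setIntegral_congr_fun measurableSet_Ioo fun s hs => by rw [inner_eval s hs]

lemma claim3 {l x : ℝ} (hx : x ∈ Ioo 0 l) {Φ : ℝ → ℂ} (hΦ : Continuous Φ)
    {B : ℝ} (hB : ∀ v, ‖Φ v‖ ≤ B)
    {g : ℝ → ℂ} (hg : IntegrableOn g (Ioo 0 l)) :
    ((∫ t in Ioo 0 x, (Φ (x - t) - Φ 0) * g t)
      + ∫ s in Ioo 0 l, (Φ x - Φ (x - min s x)) * g s)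
      = (Φ x - Φ 0) * ∫ t in Ioo 0 l, g t := by
  obtain ⟨hx0, hxl⟩ := hx
  have hgx : IntegrableOn g (Ioo 0 x) := hg.mono_set (Ioo_subset_Ioo_right hxl.le)
  have hIco : Ico x l ⊆ Ioo 0 l := fun s hs => ⟨lt_of_lt_of_le hx0 hs.1, hs.2⟩
  have hgI : IntegrableOn g (Ico x l) := hg.mono_set hIco
  have hdisj : Disjoint (Ioo 0 x) (Ico x l) := by
    rw [Set.disjoint_left]
    rintro t ⟨_, h2⟩ ⟨h3, _⟩
    exact absurd h2 (not_lt.mpr h3)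
  have hbd : ∀ a b : ℝ, ‖Φ a - Φ b‖ ≤ B + B := fun a b =>
    le_trans (norm_sub_le _ _) (add_le_add (hB _) (hB _))
  have c1 : Continuous fun s : ℝ => Φ x - Φ (x - min s x) :=
    continuous_const.sub (hΦ.comp (continuous_const.sub (continuous_id.min continuous_const)))
  have c2 : Continuous fun t : ℝ => Φ (x - t) - Φ 0 :=
    (hΦ.comp (continuous_const.sub continuous_id)).sub continuous_const
  have c3 : Continuous fun t : ℝ => Φ x - Φ (x - t) :=
    continuous_const.sub (hΦ.comp (continuous_const.sub continuous_id))
  have hconst1 : IntegrableOn (fun t : ℝ => (Φ x - Φ 0) * g t) (Ioo 0 x) := hgx.const_mul _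
  have hconst2 : IntegrableOn (fun t : ℝ => (Φ x - Φ 0) * g t) (Ico x l) := hgI.const_mul _
  have i1 : IntegrableOn (fun t : ℝ => (Φ x - Φ (x - t)) * g t) (Ioo 0 x) :=
    hgx.bdd_mul c3.aestronglyMeasurable (Filter.Eventually.of_forall fun v => hbd _ _)
  have i2 : IntegrableOn (fun t : ℝ => (Φ (x - t) - Φ 0) * g t) (Ioo 0 x) :=
    hgx.bdd_mul c2.aestronglyMeasurable (Filter.Eventually.of_forall fun v => hbd _ _)
  have isplit1 : IntegrableOn (fun s : ℝ => (Φ x - Φ (x - min s x)) * g s) (Ioo 0 x) :=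
    hgx.bdd_mul c1.aestronglyMeasurable (Filter.Eventually.of_forall fun v => hbd _ _)
  have isplit2 : IntegrableOn (fun s : ℝ => (Φ x - Φ (x - min s x)) * g s) (Ico x l) :=
    hgI.bdd_mul c1.aestronglyMeasurable (Filter.Eventually.of_forall fun v => hbd _ _)
  have hsplit : (∫ s in Ioo 0 l, (Φ x - Φ (x - min s x)) * g s)
      = (∫ s in Ioo 0 x, (Φ x - Φ (x - s)) * g s) + ∫ s in Ico x l, (Φ x - Φ 0) * g s := by
    rw [← Ioo_union_Ico_eq_Ioo hx0 hxl.le,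
      setIntegral_union hdisj measurableSet_Ico isplit1 isplit2]
    congr 1
    · exact setIntegral_congr_fun measurableSet_Ioo fun s hs => by rw [min_eq_left hs.2.le]
    · exact setIntegral_congr_fun measurableSet_Ico fun s hs => by
        rw [min_eq_right hs.1, sub_self]
  rw [hsplit, ← add_assoc, ← integral_add i2 i1]
  have hc : EqOn (fun t : ℝ => (Φ (x - t) - Φ 0) * g t + (Φ x - Φ (x - t)) * g t)
      (fun t : ℝ => (Φ x - Φ 0) * g t) (Ioo 0 x) := fun t _ => by ring
  rw [setIntegral_congr_fun measurableSet_Ioo hc,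
    ← setIntegral_union hdisj measurableSet_Ico hconst1 hconst2,
    Ioo_union_Ico_eq_Ioo hx0 hxl.le, integral_const_mul]

end S2IdAux

open S2IdAux

/-- For `φ` continuously differentiable on `[0,l]` and
`(S₂f)(x) = -∫₀ˣ φ'(x-t) conj(φ(0)) f(t) dt`, the commutator `A S₂ - S₂ A*`
is the rank-one operator `f ↦ i (φ(x) - φ(0)) conj(φ(0)) ∫₀ˡ f`. -/
theorem identity_for_S2 (l : ℝ) (hl : 0 < l) (φ : ℝ → ℂ)
    (hφ : ContDiffOn ℝ 1 φ (Icc (0:ℝ) l))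
    (A Astar S₂ : Lp ℂ 2 (volume.restrict (Ioo (0:ℝ) l)) →L[ℂ] Lp ℂ 2 (volume.restrict (Ioo (0:ℝ) l)))
    (hA : ∀ f : Lp ℂ 2 (volume.restrict (Ioo (0:ℝ) l)),
      ⇑(A f) =ᵐ[volume.restrict (Ioo (0:ℝ) l)]
        fun x => -Complex.I * ∫ t in Ioo (0:ℝ) x, f t)
    (hAstar : ∀ f : Lp ℂ 2 (volume.restrict (Ioo (0:ℝ) l)),
      ⇑(Astar f) =ᵐ[volume.restrict (Ioo (0:ℝ) l)]
        fun x => Complex.I * ∫ t in Ioo x l, f t)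
    (hS₂ : ∀ f : Lp ℂ 2 (volume.restrict (Ioo (0:ℝ) l)),
      ⇑(S₂ f) =ᵐ[volume.restrict (Ioo (0:ℝ) l)]
        fun x => -∫ t in Ioo (0:ℝ) x,
          derivWithin φ (Icc (0:ℝ) l) (x - t) * (starRingEnd ℂ) (φ 0) * f t) :
    ∀ f : Lp ℂ 2 (volume.restrict (Ioo (0:ℝ) l)),
      ⇑(A (S₂ f) - S₂ (Astar f)) =ᵐ[volume.restrict (Ioo (0:ℝ) l)]
        fun x => Complex.I * (φ x - φ 0) * (starRingEnd ℂ) (φ 0) *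
          ∫ t in Ioo (0:ℝ) l, f t := by
  intro f
  haveI : IsFiniteMeasure (volume.restrict (Ioo (0:ℝ) l)) :=
    ⟨by rw [Measure.restrict_apply_univ]; exact measure_Ioo_lt_top⟩
  set c := (starRingEnd ℂ) (φ 0) with hcdef
  set K := derivWithin φ (Icc (0:ℝ) l) with hKdef
  set clamp : ℝ → ℝ := fun v => max 0 (min v l) with hclampdef
  have hclamp_mem : ∀ v, clamp v ∈ Icc (0:ℝ) l := fun v =>
    ⟨le_max_left _ _, max_le (by linarith) (min_le_right _ _)⟩
  have hclamp_id : ∀ v ∈ Icc (0:ℝ) l, clamp v = v := by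
    intro v hv
    simp only [hclampdef]
    rw [min_eq_left hv.2, max_eq_right hv.1]
  have hclamp_cont : Continuous clamp := continuous_const.max (continuous_id.min continuous_const)
  set K' : ℝ → ℂ := fun v => K (clamp v) with hK'def
  set Φ : ℝ → ℂ := fun v => φ (clamp v) with hΦdef
  have hKcont : ContinuousOn K (Icc (0:ℝ) l) :=
    hφ.continuousOn_derivWithin (uniqueDiffOn_Icc hl) le_rfl
  have hK'cont : Continuous K' := hKcont.comp_continuous hclamp_cont hclamp_mem
  have hΦcont : Continuous Φ := hφ.continuousOn.comp_continuous hclamp_cont hclamp_mem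
  obtain ⟨M, hM⟩ : ∃ M, ∀ v, ‖K' v‖ ≤ M := by
    obtain ⟨M, hM⟩ := (isCompact_Icc (a := (0:ℝ)) (b := l)).exists_bound_of_continuousOn hKcont
    exact ⟨M, fun v => hM _ (hclamp_mem v)⟩
  obtain ⟨B, hB⟩ : ∃ B, ∀ v, ‖Φ v‖ ≤ B := by
    obtain ⟨B, hB⟩ := (isCompact_Icc (a := (0:ℝ)) (b := l)).exists_bound_of_continuousOn
      hφ.continuousOn
    exact ⟨B, fun v => hB _ (hclamp_mem v)⟩
  have hftc : ∀ a b : ℝ, 0 ≤ a → a ≤ b → b ≤ l → (∫ v in a..b, K' v) = Φ b - Φ a := by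
    intro a b ha hab hbl
    have hsub : Icc a b ⊆ Icc (0:ℝ) l := Icc_subset_Icc ha hbl
    have heq : EqOn K' K (uIcc a b) := by
      rw [uIcc_of_le hab]
      intro v hv
      simp only [hK'def]
      rw [hclamp_id v (hsub hv)]
    rw [intervalIntegral.integral_congr heq]
    have hder : ∀ y ∈ Ioo a b, HasDerivWithinAt φ (K y) (Ioi y) y := by
      intro y hy
      have hy' : y ∈ Ioo (0:ℝ) l := ⟨lt_of_le_of_lt ha hy.1, lt_of_lt_of_le hy.2 hbl⟩
      have hdw : HasDerivWithinAt φ (K y) (Icc (0:ℝ) l) y :=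
        ((hφ.differentiableOn one_ne_zero) y ⟨hy'.1.le, hy'.2.le⟩).hasDerivWithinAt
      exact (hdw.hasDerivAt (Icc_mem_nhds hy'.1 hy'.2)).hasDerivWithinAt
    have hint : IntervalIntegrable K volume a b :=
      (hKcont.mono (by rw [uIcc_of_le hab]; exact hsub)).intervalIntegrable
    rw [intervalIntegral.integral_eq_sub_of_hasDeriv_right_of_le hab
      (hφ.continuousOn.mono hsub) hder hint]
    simp only [hΦdef]
    rw [hclamp_id b ⟨ha.trans hab, hbl⟩, hclamp_id a ⟨ha, hab.trans hbl⟩]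
  have hfi : Integrable (⇑f) (volume.restrict (Ioo (0:ℝ) l)) :=
    (Lp.memLp f).integrable (by norm_num)
  set g : ℝ → ℂ := fun t => c * f t with hgdef
  have hgint : IntegrableOn g (Ioo (0:ℝ) l) volume := hfi.const_mul c
  have step1 : ∀ x ∈ Ioo (0:ℝ) l,
      (∫ u in Ioo (0:ℝ) x, (S₂ f) u) =
        ∫ u in Ioo (0:ℝ) x, -(∫ t in Ioo (0:ℝ) u, K' (u - t) * g t) := by
    intro x hx
    refine integral_congr_ae ?_
    have h0 := ae_restrict_of_ae_restrict_of_subset (Ioo_subset_Ioo_right hx.2.le) (hS₂ f)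
    filter_upwards [h0, ae_restrict_mem measurableSet_Ioo] with u hu1 hu2
    simp only [hu1]
    refine neg_inj.mpr (setIntegral_congr_fun measurableSet_Ioo fun t ht => ?_)
    have hmem : u - t ∈ Icc (0:ℝ) l :=
      ⟨by linarith [ht.1, ht.2], by linarith [hu2.2, hx.2, ht.1]⟩
    simp only [hK'def, hgdef]
    rw [hclamp_id _ hmem, mul_assoc]
  have step2 : ∀ x ∈ Ioo (0:ℝ) l,
      (∫ t in Ioo (0:ℝ) x, K (x - t) * c * (Astar f) t)
        = Complex.I * ∫ t in Ioo (0:ℝ) x, K' (x - t) * ∫ s in Ioo t l, g s := by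
    intro x hx
    rw [← integral_const_mul]
    refine integral_congr_ae ?_
    have h0 := ae_restrict_of_ae_restrict_of_subset (Ioo_subset_Ioo_right hx.2.le) (hAstar f)
    filter_upwards [h0, ae_restrict_mem measurableSet_Ioo] with t ht1 ht2
    have hmem : x - t ∈ Icc (0:ℝ) l :=
      ⟨by linarith [ht2.1, ht2.2], by linarith [ht2.1, hx.2]⟩
    have hgint2 : (∫ s in Ioo t l, g s) = c * ∫ s in Ioo t l, f s := by
      simp only [hgdef]
      exact integral_const_mul c _
    simp only [ht1, hgint2, hK'def]
    rw [hclamp_id _ hmem]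
    ring
  filter_upwards [Lp.coeFn_sub (A (S₂ f)) (S₂ (Astar f)), hA (S₂ f), hS₂ (Astar f),
    ae_restrict_mem measurableSet_Ioo] with x h3 h1 h2 hx
  simp only [Pi.sub_apply] at h3
  simp only [h3, h1, h2]
  rw [step1 x hx, integral_neg, claim1 hx hK'cont hM hftc hgint, step2 x hx,
    claim2 hx hK'cont hM hftc hgint]
  have hsum := claim3 hx hΦcont hB hgint
  have hgl : (∫ t in Ioo (0:ℝ) l, g t) = c * ∫ t in Ioo (0:ℝ) l, f t := by
    simp only [hgdef]
    exact integral_const_mul c _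
  have hΦx : Φ x = φ x := by
    simp only [hΦdef]
    rw [hclamp_id x ⟨hx.1.le, hx.2.le⟩]
  have hΦ0 : Φ 0 = φ 0 := by
    simp only [hΦdef]
    rw [hclamp_id 0 ⟨le_rfl, hl.le⟩]
  linear_combination Complex.I * hsum + Complex.I * (Φ x - Φ 0) * hgl
    + Complex.I * c * (∫ t in Ioo (0:ℝ) l, f t) * (hΦx - hΦ0)
end
end

section
/- Let φ : [0,l] → ℂ be continuously differentiable and define S on L²(0,l) by (Sf)(x) = (1 + |φ(0)|²) f(x) + ∫₀ˡ s(x,t) f(t) dt, with s the close-to-displacement kernel associated to φ. If S satisfies i(A S - S A*) = Φ₁ Φ₁* + Φ₂ Φ₂* (the skew-self-adjoint Dirac identity), then S ≥ I; in particular S is strictly positive: ⟨Sf, f⟩ ≥ ⟨f, f⟩ for all f ∈ L²(0,l). -/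
open MeasureTheory Set
noncomputable section
section
variable (μ : Measure ℝ) (E F : ℝ → ℂ) (c0 : ℂ)
def e1 (ζ x : ℝ) : ℂ := if ζ < x then (starRingEnd ℂ) (E (x - ζ)) * F x else 0
def hfun (ζ : ℝ) : ℂ := ∫ x, e1 E F ζ x ∂μ
def eA (x t ζ : ℝ) : ℂ :=
  if ζ < min x t then (starRingEnd ℂ) (E (x - ζ)) * E (t - ζ) else 0
def Pf (x t : ℝ) : ℂ :=
  ∫ ζ, (if ζ < min x t then E (x - ζ) * (starRingEnd ℂ) (E (t - ζ)) else 0) ∂μ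
def sker2 (x t : ℝ) : ℂ :=
  Pf μ E x t + ((if t < x then E (x - t) * (starRingEnd ℂ) c0 else 0) +
    (if x < t then c0 * (starRingEnd ℂ) (E (t - x)) else 0))
def wA (p : ℝ × ℝ) : ℂ :=
  (∫ ζ, eA E p.1 p.2 ζ ∂μ) * ((starRingEnd ℂ) (F p.2) * F p.1)
def wB (p : ℝ × ℝ) : ℂ :=
  (if p.2 < p.1 then (starRingEnd ℂ) (E (p.1 - p.2)) * c0 else 0) *
    ((starRingEnd ℂ) (F p.2) * F p.1)
def wC (p : ℝ × ℝ) : ℂ :=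
  (if p.1 < p.2 then (starRingEnd ℂ) c0 * E (p.2 - p.1) else 0) *
    ((starRingEnd ℂ) (F p.2) * F p.1)
def T2 (x : ℝ) : ℂ := ∫ t, sker2 μ E c0 x t * F t ∂μ

variable {μ E F c0}
variable {M : ℝ}

lemma e1_meas [SFinite μ] (hE : Continuous E) (hFm : AEStronglyMeasurable F μ) :
    AEStronglyMeasurable (fun p : ℝ × ℝ => e1 E F p.1 p.2) (μ.prod μ) := by
  have hrw : (fun p : ℝ × ℝ => e1 E F p.1 p.2)
      = Set.indicator {p : ℝ × ℝ | p.1 < p.2}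
          (fun p => (starRingEnd ℂ) (E (p.2 - p.1)) * F p.2) := by
    funext p
    rw [e1, Set.indicator_apply]
    rfl
  rw [hrw]
  refine AEStronglyMeasurable.indicator ?_ (measurableSet_lt measurable_fst measurable_snd)
  exact ((Complex.continuous_conj.comp (hE.comp (continuous_snd.sub
    continuous_fst))).aestronglyMeasurable).mul hFm.comp_snd

lemma e1_int [SFinite μ] [IsFiniteMeasure μ] (hE : Continuous E) (hM : ∀ y, ‖E y‖ ≤ M)
    (hFm : AEStronglyMeasurable F μ) (hF1 : Integrable F μ) :
    Integrable (fun p : ℝ × ℝ => e1 E F p.1 p.2) (μ.prod μ) := by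
  refine Integrable.mono' ((integrable_const (1:ℝ)).mul_prod (hF1.norm.const_mul M))
    (e1_meas hE hFm) (Filter.Eventually.of_forall fun p => ?_)
  simp only [e1]
  by_cases hp : p.1 < p.2
  · rw [if_pos hp, norm_mul, RCLike.norm_conj, one_mul]
    exact mul_le_mul_of_nonneg_right (hM _) (norm_nonneg _)
  · rw [if_neg hp, norm_zero, one_mul]
    have hM0 : 0 ≤ M := le_trans (norm_nonneg _) (hM 0)
    positivity

lemma hfun_meas [SFinite μ] (hE : Continuous E) (hFm : AEStronglyMeasurable F μ) :
    AEStronglyMeasurable (hfun μ E F) μ :=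
  (e1_meas hE hFm).integral_prod_right'

lemma hfun_bound (hM : ∀ y, ‖E y‖ ≤ M) (hF1 : Integrable F μ) (ζ : ℝ) :
    ‖hfun μ E F ζ‖ ≤ M * ∫ x, ‖F x‖ ∂μ := by
  refine le_trans (norm_integral_le_integral_norm _) ?_
  rw [← integral_const_mul]
  refine integral_mono_of_nonneg (Filter.Eventually.of_forall fun x => norm_nonneg _)
    (hF1.norm.const_mul M) (Filter.Eventually.of_forall fun x => ?_)
  simp only [e1]
  by_cases hx : ζ < x
  · rw [if_pos hx, norm_mul, RCLike.norm_conj]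
    exact mul_le_mul_of_nonneg_right (hM _) (norm_nonneg _)
  · rw [if_neg hx, norm_zero]
    have hM0 : 0 ≤ M := le_trans (norm_nonneg _) (hM 0)
    positivity

lemma e1_conj (ζ x : ℝ) : (starRingEnd ℂ) (e1 E F ζ x)
    = if ζ < x then E (x - ζ) * (starRingEnd ℂ) (F x) else 0 := by
  rw [e1, apply_ite (starRingEnd ℂ), map_mul, Complex.conj_conj, map_zero]

lemma hfun_conj (ζ : ℝ) : (starRingEnd ℂ) (hfun μ E F ζ)
    = ∫ x, (if ζ < x then E (x - ζ) * (starRingEnd ℂ) (F x) else 0) ∂μ := by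
  rw [hfun, ← integral_conj]
  exact integral_congr_ae (Filter.Eventually.of_forall fun x => e1_conj ζ x)
end

lemma eA_meas [SFinite μ] (hE : Continuous E) :
    AEStronglyMeasurable (fun q : (ℝ × ℝ) × ℝ => eA E q.1.1 q.1.2 q.2)
      ((μ.prod μ).prod μ) := by
  have hrw : (fun q : (ℝ × ℝ) × ℝ => eA E q.1.1 q.1.2 q.2)
      = Set.indicator {q : (ℝ × ℝ) × ℝ | q.2 < min q.1.1 q.1.2}
          (fun q => (starRingEnd ℂ) (E (q.1.1 - q.2)) * E (q.1.2 - q.2)) := by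
    funext q
    rw [eA, Set.indicator_apply]
    rfl
  rw [hrw]
  refine AEStronglyMeasurable.indicator ?_
    (measurableSet_lt measurable_snd ((measurable_fst.fst).min (measurable_fst.snd)))
  exact ((Complex.continuous_conj.comp (hE.comp
    ((continuous_fst.fst).sub continuous_snd))).mul (hE.comp
    ((continuous_fst.snd).sub continuous_snd))).aestronglyMeasurable

lemma eA_int_bound [IsFiniteMeasure μ] (hM : ∀ y, ‖E y‖ ≤ M) (x t : ℝ) :
    ‖∫ ζ, eA E x t ζ ∂μ‖ ≤ M * M * (μ Set.univ).toReal := by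
  have hM0 : 0 ≤ M := le_trans (norm_nonneg _) (hM 0)
  refine le_trans (norm_integral_le_integral_norm _) ?_
  have hle : ∫ ζ, ‖eA E x t ζ‖ ∂μ ≤ ∫ _, M * M ∂μ := by
    refine integral_mono_of_nonneg (Filter.Eventually.of_forall fun ζ => norm_nonneg _)
      (integrable_const _) (Filter.Eventually.of_forall fun ζ => ?_)
    simp only [eA]
    by_cases hm : ζ < min x t
    · rw [if_pos hm, norm_mul, RCLike.norm_conj]
      exact mul_le_mul (hM _) (hM _) (norm_nonneg _) hM0
    · rw [if_neg hm, norm_zero]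
      positivity
  refine le_trans hle ?_
  rw [integral_const, smul_eq_mul, mul_comm, Measure.real]

lemma wB_meas [SFinite μ] (hE : Continuous E) (hFm : AEStronglyMeasurable F μ) :
    AEStronglyMeasurable (wB E F c0) (μ.prod μ) := by
  have hrw : wB E F c0 = Set.indicator {p : ℝ × ℝ | p.2 < p.1}
      (fun p => ((starRingEnd ℂ) (E (p.1 - p.2)) * c0) * ((starRingEnd ℂ) (F p.2) * F p.1)) := by
    funext p
    by_cases hp : p.2 < p.1
    · simp [wB, Set.indicator_apply, hp]
    · simp [wB, Set.indicator_apply, hp]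
  rw [hrw]
  refine AEStronglyMeasurable.indicator ?_ (measurableSet_lt measurable_snd measurable_fst)
  exact (((Complex.continuous_conj.comp (hE.comp
    (continuous_fst.sub continuous_snd))).aestronglyMeasurable).mul
      aestronglyMeasurable_const).mul
    ((Complex.continuous_conj.comp_aestronglyMeasurable hFm.comp_snd).mul hFm.comp_fst)

lemma wB_int [SFinite μ] [IsFiniteMeasure μ] (hE : Continuous E) (hM : ∀ y, ‖E y‖ ≤ M)
    (hFm : AEStronglyMeasurable F μ) (hF1 : Integrable F μ) :
    Integrable (wB E F c0) (μ.prod μ) := by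
  refine Integrable.mono' ((hF1.norm.mul_prod hF1.norm).const_mul (M * ‖c0‖))
    (wB_meas hE hFm) (Filter.Eventually.of_forall fun p => ?_)
  rw [wB]
  by_cases hp : p.2 < p.1
  · rw [if_pos hp, norm_mul, norm_mul, norm_mul, RCLike.norm_conj, RCLike.norm_conj]
    have h1 : ‖E (p.1 - p.2)‖ * ‖c0‖ ≤ M * ‖c0‖ :=
      mul_le_mul_of_nonneg_right (hM _) (norm_nonneg _)
    calc ‖E (p.1 - p.2)‖ * ‖c0‖ * (‖F p.2‖ * ‖F p.1‖)
        ≤ M * ‖c0‖ * (‖F p.2‖ * ‖F p.1‖) :=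
          mul_le_mul_of_nonneg_right h1 (by positivity)
      _ = M * ‖c0‖ * (‖F p.1‖ * ‖F p.2‖) := by ring
  · rw [if_neg hp, zero_mul, norm_zero]
    have hM0 : 0 ≤ M := le_trans (norm_nonneg _) (hM 0)
    positivity

lemma wC_meas [SFinite μ] (hE : Continuous E) (hFm : AEStronglyMeasurable F μ) :
    AEStronglyMeasurable (wC E F c0) (μ.prod μ) := by
  have hrw : wC E F c0 = Set.indicator {p : ℝ × ℝ | p.1 < p.2}
      (fun p => ((starRingEnd ℂ) c0 * E (p.2 - p.1)) * ((starRingEnd ℂ) (F p.2) * F p.1)) := by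
    funext p
    by_cases hp : p.1 < p.2
    · simp [wC, Set.indicator_apply, hp]
    · simp [wC, Set.indicator_apply, hp]
  rw [hrw]
  refine AEStronglyMeasurable.indicator ?_ (measurableSet_lt measurable_fst measurable_snd)
  exact ((aestronglyMeasurable_const.mul (hE.comp
    (continuous_snd.sub continuous_fst)).aestronglyMeasurable)).mul
    ((Complex.continuous_conj.comp_aestronglyMeasurable hFm.comp_snd).mul hFm.comp_fst)

lemma wC_int [SFinite μ] [IsFiniteMeasure μ] (hE : Continuous E) (hM : ∀ y, ‖E y‖ ≤ M)
    (hFm : AEStronglyMeasurable F μ) (hF1 : Integrable F μ) :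
    Integrable (wC E F c0) (μ.prod μ) := by
  refine Integrable.mono' ((hF1.norm.mul_prod hF1.norm).const_mul (‖c0‖ * M))
    (wC_meas hE hFm) (Filter.Eventually.of_forall fun p => ?_)
  rw [wC]
  by_cases hp : p.1 < p.2
  · rw [if_pos hp, norm_mul, norm_mul, norm_mul, RCLike.norm_conj, RCLike.norm_conj]
    have h1 : ‖c0‖ * ‖E (p.2 - p.1)‖ ≤ ‖c0‖ * M :=
      mul_le_mul_of_nonneg_left (hM _) (norm_nonneg _)
    calc ‖c0‖ * ‖E (p.2 - p.1)‖ * (‖F p.2‖ * ‖F p.1‖)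
        ≤ ‖c0‖ * M * (‖F p.2‖ * ‖F p.1‖) :=
          mul_le_mul_of_nonneg_right h1 (by positivity)
      _ = ‖c0‖ * M * (‖F p.1‖ * ‖F p.2‖) := by ring
  · rw [if_neg hp, zero_mul, norm_zero]
    have hM0 : 0 ≤ M := le_trans (norm_nonneg _) (hM 0)
    positivity

lemma wA_meas [SFinite μ] (hE : Continuous E) (hFm : AEStronglyMeasurable F μ) :
    AEStronglyMeasurable (wA μ E F) (μ.prod μ) := by
  refine AEStronglyMeasurable.mul (eA_meas hE).integral_prod_right' ?_
  exact (Complex.continuous_conj.comp_aestronglyMeasurable hFm.comp_snd).mul hFm.comp_fst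

lemma wA_int [SFinite μ] [IsFiniteMeasure μ] (hE : Continuous E) (hM : ∀ y, ‖E y‖ ≤ M)
    (hFm : AEStronglyMeasurable F μ) (hF1 : Integrable F μ) :
    Integrable (wA μ E F) (μ.prod μ) := by
  refine Integrable.mono'
    ((hF1.norm.mul_prod hF1.norm).const_mul (M * M * (μ Set.univ).toReal))
    (wA_meas hE hFm) (Filter.Eventually.of_forall fun p => ?_)
  rw [wA, norm_mul, norm_mul, RCLike.norm_conj]
  calc ‖∫ ζ, eA E p.1 p.2 ζ ∂μ‖ * (‖F p.2‖ * ‖F p.1‖)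
      ≤ M * M * (μ Set.univ).toReal * (‖F p.2‖ * ‖F p.1‖) :=
        mul_le_mul_of_nonneg_right (eA_int_bound hM p.1 p.2) (by positivity)
    _ = M * M * (μ Set.univ).toReal * (‖F p.1‖ * ‖F p.2‖) := by ring

lemma IB [SFinite μ] [IsFiniteMeasure μ] (hE : Continuous E) (hM : ∀ y, ‖E y‖ ≤ M)
    (hFm : AEStronglyMeasurable F μ) (hF1 : Integrable F μ) :
    ∫ p, wB E F c0 p ∂(μ.prod μ)
      = c0 * ∫ ζ, (starRingEnd ℂ) (F ζ) * hfun μ E F ζ ∂μ := by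
  rw [← integral_prod_swap (wB E F c0)]
  have hswap_eq : (fun z : ℝ × ℝ => wB E F c0 z.swap)
      = fun z : ℝ × ℝ => (c0 * (starRingEnd ℂ) (F z.1)) * e1 E F z.1 z.2 := by
    funext z
    by_cases hz : z.1 < z.2
    · simp only [wB, e1, Prod.fst_swap, Prod.snd_swap, if_pos hz]
      ring
    · simp only [wB, e1, Prod.fst_swap, Prod.snd_swap, if_neg hz, zero_mul, mul_zero]
  rw [hswap_eq]
  have hint : Integrable (fun z : ℝ × ℝ => (c0 * (starRingEnd ℂ) (F z.1)) * e1 E F z.1 z.2)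
      (μ.prod μ) := by
    rw [← hswap_eq]
    exact (wB_int (c0 := c0) hE hM hFm hF1).swap
  rw [integral_prod _ hint]
  have hx : ∀ x, (∫ y, (c0 * (starRingEnd ℂ) (F x)) * e1 E F x y ∂μ)
      = c0 * ((starRingEnd ℂ) (F x) * hfun μ E F x) := by
    intro x
    rw [integral_const_mul, hfun, mul_assoc]
  rw [integral_congr_ae (Filter.Eventually.of_forall hx), integral_const_mul]

lemma IC [SFinite μ] [IsFiniteMeasure μ] (hE : Continuous E) (hM : ∀ y, ‖E y‖ ≤ M)
    (hFm : AEStronglyMeasurable F μ) (hF1 : Integrable F μ) :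
    ∫ p, wC E F c0 p ∂(μ.prod μ)
      = (starRingEnd ℂ) c0 * ∫ ζ, F ζ * (starRingEnd ℂ) (hfun μ E F ζ) ∂μ := by
  rw [integral_prod _ (wC_int (c0 := c0) hE hM hFm hF1)]
  have hx : ∀ x, (∫ t, wC E F c0 (x, t) ∂μ)
      = (starRingEnd ℂ) c0 * (F x * (starRingEnd ℂ) (hfun μ E F x)) := by
    intro x
    have hpt : ∀ t, wC E F c0 (x, t)
        = ((starRingEnd ℂ) c0 * F x) *
            (if x < t then E (t - x) * (starRingEnd ℂ) (F t) else 0) := by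
      intro t
      by_cases ht : x < t
      · simp only [wC, if_pos ht]
        ring
      · simp only [wC, if_neg ht, zero_mul, mul_zero]
    rw [integral_congr_ae (Filter.Eventually.of_forall hpt), integral_const_mul, ← hfun_conj]
    ring
  rw [integral_congr_ae (Filter.Eventually.of_forall hx), integral_const_mul]

lemma IA [SFinite μ] [IsFiniteMeasure μ] (hE : Continuous E) (hM : ∀ y, ‖E y‖ ≤ M)
    (hFm : AEStronglyMeasurable F μ) (hF1 : Integrable F μ) :
    ∫ p, wA μ E F p ∂(μ.prod μ)
      = ∫ ζ, hfun μ E F ζ * (starRingEnd ℂ) (hfun μ E F ζ) ∂μ := by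
  have hM0 : 0 ≤ M := le_trans (norm_nonneg _) (hM 0)
  have hGi : Integrable (Function.uncurry fun (p : ℝ × ℝ) (ζ : ℝ) =>
      eA E p.1 p.2 ζ * ((starRingEnd ℂ) (F p.2) * F p.1)) ((μ.prod μ).prod μ) := by
    refine Integrable.mono'
      ((((hF1.norm.mul_prod hF1.norm).const_mul (M * M)).mul_prod (integrable_const (1:ℝ))))
      ((eA_meas hE).mul
        (((Complex.continuous_conj.comp_aestronglyMeasurable hFm.comp_snd).mul hFm.comp_fst).comp_fst))
      (Filter.Eventually.of_forall fun q => ?_)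
    simp only [Function.uncurry]
    rw [norm_mul, norm_mul, RCLike.norm_conj, mul_one]
    have hb : ‖eA E q.1.1 q.1.2 q.2‖ ≤ M * M := by
      simp only [eA]
      by_cases hm : q.2 < min q.1.1 q.1.2
      · rw [if_pos hm, norm_mul, RCLike.norm_conj]
        exact mul_le_mul (hM _) (hM _) (norm_nonneg _) hM0
      · rw [if_neg hm, norm_zero]
        positivity
    calc ‖eA E q.1.1 q.1.2 q.2‖ * (‖F q.1.2‖ * ‖F q.1.1‖)
        ≤ M * M * (‖F q.1.2‖ * ‖F q.1.1‖) :=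
          mul_le_mul_of_nonneg_right hb (by positivity)
      _ = M * M * (‖F q.1.1‖ * ‖F q.1.2‖) := by ring
  calc ∫ p, wA μ E F p ∂(μ.prod μ)
      = ∫ p, ∫ ζ, eA E p.1 p.2 ζ * ((starRingEnd ℂ) (F p.2) * F p.1) ∂μ ∂(μ.prod μ) := by
        refine integral_congr_ae (Filter.Eventually.of_forall fun p => ?_)
        beta_reduce
        rw [wA, ← integral_mul_const]
    _ = ∫ ζ, ∫ p, eA E p.1 p.2 ζ * ((starRingEnd ℂ) (F p.2) * F p.1) ∂(μ.prod μ) ∂μ :=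
        integral_integral_swap hGi
    _ = ∫ ζ, (∫ x, e1 E F ζ x ∂μ) * (∫ t, (starRingEnd ℂ) (e1 E F ζ t) ∂μ) ∂μ := by
        refine integral_congr_ae (Filter.Eventually.of_forall fun ζ => ?_)
        beta_reduce
        rw [← integral_prod_mul]
        refine integral_congr_ae (Filter.Eventually.of_forall fun p => ?_)
        beta_reduce
        rw [e1_conj]
        simp only [eA, e1, lt_min_iff]
        by_cases h1 : ζ < p.1
        · by_cases h2 : ζ < p.2
          · rw [if_pos ⟨h1, h2⟩, if_pos h1, if_pos h2]
            ring
          · rw [if_neg (fun hc => h2 hc.2), if_pos h1, if_neg h2, mul_zero, zero_mul]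
        · rw [if_neg (fun hc => h1 hc.1), if_neg h1, zero_mul, zero_mul]
    _ = ∫ ζ, hfun μ E F ζ * (starRingEnd ℂ) (hfun μ E F ζ) ∂μ := by
        refine integral_congr_ae (Filter.Eventually.of_forall fun ζ => ?_)
        beta_reduce
        rw [integral_conj, hfun]

lemma Pf_conj (x t : ℝ) : (starRingEnd ℂ) (Pf μ E x t) = ∫ ζ, eA E x t ζ ∂μ := by
  rw [Pf, ← integral_conj]
  refine integral_congr_ae (Filter.Eventually.of_forall fun ζ => ?_)
  beta_reduce
  simp only [eA, apply_ite (starRingEnd ℂ), map_mul, Complex.conj_conj, map_zero]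

lemma sker2_conj_mul (x t : ℝ) :
    (starRingEnd ℂ) (sker2 μ E c0 x t) * ((starRingEnd ℂ) (F t) * F x)
      = wA μ E F (x, t) + wB E F c0 (x, t) + wC E F c0 (x, t) := by
  rw [sker2]
  simp only [map_add, Pf_conj, apply_ite (starRingEnd ℂ), map_mul, Complex.conj_conj, map_zero,
    wA, wB, wC]
  ring

lemma T2_pt (x : ℝ) : (starRingEnd ℂ) (T2 μ E F c0 x) * F x
    = ∫ t, (wA μ E F (x, t) + wB E F c0 (x, t) + wC E F c0 (x, t)) ∂μ := by
  rw [T2, ← integral_conj, ← integral_mul_const]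
  refine integral_congr_ae (Filter.Eventually.of_forall fun t => ?_)
  beta_reduce
  rw [map_mul, mul_assoc, sker2_conj_mul]

lemma main_identity [SFinite μ] [IsFiniteMeasure μ] (hE : Continuous E) (hM : ∀ y, ‖E y‖ ≤ M)
    (hFm : AEStronglyMeasurable F μ) (hF1 : Integrable F μ) :
    ∫ x, (starRingEnd ℂ) (T2 μ E F c0 x) * F x ∂μ
      = (∫ ζ, hfun μ E F ζ * (starRingEnd ℂ) (hfun μ E F ζ) ∂μ)
        + c0 * (∫ ζ, (starRingEnd ℂ) (F ζ) * hfun μ E F ζ ∂μ)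
        + (starRingEnd ℂ) (c0 * (∫ ζ, (starRingEnd ℂ) (F ζ) * hfun μ E F ζ ∂μ)) := by
  have hAi := wA_int hE hM hFm hF1
  have hBi := wB_int (c0 := c0) hE hM hFm hF1
  have hCi := wC_int (c0 := c0) hE hM hFm hF1
  have h12 : Integrable (fun p : ℝ × ℝ => wA μ E F p + wB E F c0 p) (μ.prod μ) := hAi.add hBi
  have hWi : Integrable (fun p : ℝ × ℝ => wA μ E F p + wB E F c0 p + wC E F c0 p) (μ.prod μ) :=
    h12.add hCi
  have hzconj : ∫ ζ, F ζ * (starRingEnd ℂ) (hfun μ E F ζ) ∂μ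
      = (starRingEnd ℂ) (∫ ζ, (starRingEnd ℂ) (F ζ) * hfun μ E F ζ ∂μ) := by
    rw [← integral_conj]
    refine integral_congr_ae (Filter.Eventually.of_forall fun ζ => ?_)
    beta_reduce
    rw [map_mul, Complex.conj_conj]
  calc ∫ x, (starRingEnd ℂ) (T2 μ E F c0 x) * F x ∂μ
      = ∫ x, ∫ t, (wA μ E F (x, t) + wB E F c0 (x, t) + wC E F c0 (x, t)) ∂μ ∂μ :=
        integral_congr_ae (Filter.Eventually.of_forall fun x => T2_pt x)
    _ = ∫ p, (wA μ E F p + wB E F c0 p + wC E F c0 p) ∂(μ.prod μ) := integral_integral hWi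
    _ = (∫ p, wA μ E F p ∂(μ.prod μ)) + (∫ p, wB E F c0 p ∂(μ.prod μ))
          + (∫ p, wC E F c0 p ∂(μ.prod μ)) := by
        rw [integral_add h12 hCi, integral_add hAi hBi]
    _ = _ := by
        rw [IA hE hM hFm hF1, IB hE hM hFm hF1, IC hE hM hFm hF1, hzconj, map_mul]

end

noncomputable section
open MeasureTheory Set

/-- The "close to displacement" kernel `s(x,t)` built from a C¹ function `φ` on `[0,l]`. -/
def closeToDisplacementKernel (l : ℝ) (φ : ℝ → ℂ) (x t : ℝ) : ℂ :=
  (∫ ζ in Ioo (0:ℝ) (min x t),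
      derivWithin φ (Icc (0:ℝ) l) (x - ζ) *
      (starRingEnd ℂ) (derivWithin φ (Icc (0:ℝ) l) (t - ζ))) +
  (if t < x then derivWithin φ (Icc (0:ℝ) l) (x - t) * (starRingEnd ℂ) (φ 0)
   else if x < t then φ 0 * (starRingEnd ℂ) (derivWithin φ (Icc (0:ℝ) l) (t - x))
   else 0)

lemma skew_main_aux (l : ℝ) (hl : 0 < l) (φ : ℝ → ℂ) (E : ℝ → ℂ) (hE : Continuous E)
    (hEeq : ∀ y ∈ Icc (0:ℝ) l, derivWithin φ (Icc (0:ℝ) l) y = E y)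
    (M : ℝ) (hM : ∀ y, ‖E y‖ ≤ M)
    (F : ℝ → ℂ) (hF : MemLp F 2 (volume.restrict (Ioo (0:ℝ) l))) :
    (∫ x, ‖F x‖^2 ∂(volume.restrict (Ioo (0:ℝ) l))) ≤
     (∫ x, (starRingEnd ℂ) (((1 : ℂ) + (‖φ 0‖ : ℂ)^2) * F x +
        ∫ t in Ioo (0:ℝ) l, closeToDisplacementKernel l φ x t * F t) * F x
        ∂(volume.restrict (Ioo (0:ℝ) l))).re := by
  haveI hμfin : IsFiniteMeasure (volume.restrict (Ioo (0:ℝ) l)) := by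
    constructor
    rw [Measure.restrict_apply_univ]
    simp [Real.volume_Ioo]
  have hFm : AEStronglyMeasurable F (volume.restrict (Ioo (0:ℝ) l)) := hF.aestronglyMeasurable
  have hF1 : Integrable F (volume.restrict (Ioo (0:ℝ) l)) := hF.integrable one_le_two
  -- kernel identification on (0,l) × (0,l)
  have hker : ∀ x ∈ Ioo (0:ℝ) l, ∀ t ∈ Ioo (0:ℝ) l,
      closeToDisplacementKernel l φ x t
        = sker2 (volume.restrict (Ioo (0:ℝ) l)) E (φ 0) x t := by
    intro x hx t ht
    have hminl : min x t ≤ l := le_trans (min_le_left _ _) hx.2.le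
    have part1 : Pf (volume.restrict (Ioo (0:ℝ) l)) E x t
        = ∫ ζ in Ioo (0:ℝ) (min x t),
            derivWithin φ (Icc (0:ℝ) l) (x - ζ) *
              (starRingEnd ℂ) (derivWithin φ (Icc (0:ℝ) l) (t - ζ)) := by
      rw [Pf]
      calc ∫ ζ in Ioo (0:ℝ) l,
            (if ζ < min x t then E (x - ζ) * (starRingEnd ℂ) (E (t - ζ)) else 0)
          = ∫ ζ in Ioo (0:ℝ) l, (Ioo (0:ℝ) (min x t)).indicator
              (fun ζ => E (x - ζ) * (starRingEnd ℂ) (E (t - ζ))) ζ := by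
            refine setIntegral_congr_fun measurableSet_Ioo fun ζ hζ => ?_
            rw [Set.indicator_apply]
            by_cases hm : ζ < min x t
            · rw [if_pos hm, if_pos (show ζ ∈ Ioo (0:ℝ) (min x t) from ⟨hζ.1, hm⟩)]
            · rw [if_neg hm, if_neg (fun hmem : ζ ∈ Ioo (0:ℝ) (min x t) => hm hmem.2)]
        _ = ∫ ζ in Ioo (0:ℝ) l ∩ Ioo (0:ℝ) (min x t),
              E (x - ζ) * (starRingEnd ℂ) (E (t - ζ)) := setIntegral_indicator measurableSet_Ioo
        _ = ∫ ζ in Ioo (0:ℝ) (min x t), E (x - ζ) * (starRingEnd ℂ) (E (t - ζ)) := by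
            rw [Set.Ioo_inter_Ioo]
            congr 1
            rw [max_self, min_eq_right hminl]
        _ = ∫ ζ in Ioo (0:ℝ) (min x t),
              derivWithin φ (Icc (0:ℝ) l) (x - ζ) *
                (starRingEnd ℂ) (derivWithin φ (Icc (0:ℝ) l) (t - ζ)) := by
            refine setIntegral_congr_fun measurableSet_Ioo fun ζ hζ => ?_
            have hxz : x - ζ ∈ Icc (0:ℝ) l := by
              constructor
              · have h1 := hζ.2
                have h2 := min_le_left x t
                linarith
              · have h1 := hζ.1
                have h2 := hx.2
                linarith
            have htz : t - ζ ∈ Icc (0:ℝ) l := by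
              constructor
              · have h1 := hζ.2
                have h2 := min_le_right x t
                linarith
              · have h1 := hζ.1
                have h2 := ht.2
                linarith
            rw [hEeq _ hxz, hEeq _ htz]
    have part2 : (if t < x then derivWithin φ (Icc (0:ℝ) l) (x - t) * (starRingEnd ℂ) (φ 0)
        else if x < t then φ 0 * (starRingEnd ℂ) (derivWithin φ (Icc (0:ℝ) l) (t - x)) else 0)
        = ((if t < x then E (x - t) * (starRingEnd ℂ) (φ 0) else 0) +
           (if x < t then φ 0 * (starRingEnd ℂ) (E (t - x)) else 0)) := by
      rcases lt_trichotomy t x with h1 | h1 | h1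
      · rw [if_pos h1, if_pos h1, if_neg (not_lt.mpr h1.le), add_zero]
        rw [hEeq (x - t) ⟨by linarith [ht.1], by linarith [hx.2, ht.1]⟩]
      · subst h1
        simp
      · rw [if_neg (not_lt.mpr h1.le), if_pos h1, if_pos h1, if_neg (not_lt.mpr h1.le), zero_add]
        rw [hEeq (t - x) ⟨by linarith [hx.1], by linarith [ht.2, hx.1]⟩]
    rw [closeToDisplacementKernel, part2, sker2, part1]
  -- abbreviations
  have hzconj : ∫ ζ, F ζ * (starRingEnd ℂ) (hfun (volume.restrict (Ioo (0:ℝ) l)) E F ζ)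
        ∂(volume.restrict (Ioo (0:ℝ) l))
      = (starRingEnd ℂ) (∫ ζ, (starRingEnd ℂ) (F ζ) * hfun (volume.restrict (Ioo (0:ℝ) l)) E F ζ
        ∂(volume.restrict (Ioo (0:ℝ) l))) := by
    rw [← integral_conj]
    refine integral_congr_ae (Filter.Eventually.of_forall fun ζ => ?_)
    beta_reduce
    rw [map_mul, Complex.conj_conj]
  -- integrability of the scalar products
  have hhm : AEStronglyMeasurable (hfun (volume.restrict (Ioo (0:ℝ) l)) E F)
      (volume.restrict (Ioo (0:ℝ) l)) := hfun_meas hE hFm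
  have hconjFh : Integrable (fun ζ => (starRingEnd ℂ) (F ζ) *
      hfun (volume.restrict (Ioo (0:ℝ) l)) E F ζ) (volume.restrict (Ioo (0:ℝ) l)) := by
    refine Integrable.mono' (hF1.norm.const_mul (M * ∫ x, ‖F x‖ ∂(volume.restrict (Ioo (0:ℝ) l))))
      ((Complex.continuous_conj.comp_aestronglyMeasurable hFm).mul hhm)
      (Filter.Eventually.of_forall fun ζ => ?_)
    rw [norm_mul, RCLike.norm_conj, mul_comm]
    exact mul_le_mul_of_nonneg_right (hfun_bound hM hF1 ζ) (norm_nonneg _)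
  have hF2R : Integrable (fun x => ‖F x‖^2) (volume.restrict (Ioo (0:ℝ) l)) :=
    hF.norm.integrable_sq
  have hnormSqh : Integrable
      (fun ζ => Complex.normSq (hfun (volume.restrict (Ioo (0:ℝ) l)) E F ζ))
      (volume.restrict (Ioo (0:ℝ) l)) := by
    set CF := ∫ x, ‖F x‖ ∂(volume.restrict (Ioo (0:ℝ) l)) with hCFdef
    refine Integrable.mono' (integrable_const ((M*CF)*(M*CF)))
      (Complex.continuous_normSq.comp_aestronglyMeasurable hhm)
      (Filter.Eventually.of_forall fun ζ => ?_)
    rw [Real.norm_eq_abs, abs_of_nonneg (Complex.normSq_nonneg _),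
      Complex.normSq_eq_norm_sq, sq]
    exact mul_le_mul (hfun_bound hM hF1 ζ) (hfun_bound hM hF1 ζ) (norm_nonneg _)
      (le_trans (norm_nonneg _) (hfun_bound hM hF1 ζ))
  -- re of the main identity
  have hhint : ∫ ζ, hfun (volume.restrict (Ioo (0:ℝ) l)) E F ζ *
        (starRingEnd ℂ) (hfun (volume.restrict (Ioo (0:ℝ) l)) E F ζ)
        ∂(volume.restrict (Ioo (0:ℝ) l))
      = ((∫ ζ, Complex.normSq (hfun (volume.restrict (Ioo (0:ℝ) l)) E F ζ)
          ∂(volume.restrict (Ioo (0:ℝ) l)) : ℝ) : ℂ) := by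
    calc ∫ ζ, hfun (volume.restrict (Ioo (0:ℝ) l)) E F ζ *
          (starRingEnd ℂ) (hfun (volume.restrict (Ioo (0:ℝ) l)) E F ζ)
          ∂(volume.restrict (Ioo (0:ℝ) l))
        = ∫ ζ, ((Complex.normSq (hfun (volume.restrict (Ioo (0:ℝ) l)) E F ζ) : ℝ) : ℂ)
            ∂(volume.restrict (Ioo (0:ℝ) l)) :=
          integral_congr_ae (Filter.Eventually.of_forall fun ζ => Complex.mul_conj _)
      _ = _ := integral_ofReal
  have hre : (∫ x, (starRingEnd ℂ) (T2 (volume.restrict (Ioo (0:ℝ) l)) E F (φ 0) x) * F x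
        ∂(volume.restrict (Ioo (0:ℝ) l))).re
      = (∫ ζ, Complex.normSq (hfun (volume.restrict (Ioo (0:ℝ) l)) E F ζ)
          ∂(volume.restrict (Ioo (0:ℝ) l)))
        + 2 * ((φ 0) * ∫ ζ, (starRingEnd ℂ) (F ζ) * hfun (volume.restrict (Ioo (0:ℝ) l)) E F ζ
          ∂(volume.restrict (Ioo (0:ℝ) l))).re := by
    rw [main_identity hE hM hFm hF1, hhint]
    simp only [Complex.add_re, Complex.ofReal_re, Complex.conj_re]
    ring
  -- (φ 0) * z as an integral of re
  have hintz : Integrable (fun ζ => (φ 0) * ((starRingEnd ℂ) (F ζ) *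
      hfun (volume.restrict (Ioo (0:ℝ) l)) E F ζ)) (volume.restrict (Ioo (0:ℝ) l)) :=
    hconjFh.const_mul _
  have hzre : ((φ 0) * ∫ ζ, (starRingEnd ℂ) (F ζ) * hfun (volume.restrict (Ioo (0:ℝ) l)) E F ζ
        ∂(volume.restrict (Ioo (0:ℝ) l))).re
      = ∫ ζ, ((φ 0) * ((starRingEnd ℂ) (F ζ) * hfun (volume.restrict (Ioo (0:ℝ) l)) E F ζ)).re
        ∂(volume.restrict (Ioo (0:ℝ) l)) := by
    rw [← integral_const_mul]
    exact (integral_re hintz).symm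
  -- pointwise expansion of the square
  have hptwise : ∀ ζ, Complex.normSq ((starRingEnd ℂ) (φ 0) * F ζ
        + hfun (volume.restrict (Ioo (0:ℝ) l)) E F ζ)
      = ‖φ 0‖^2 * ‖F ζ‖^2 + Complex.normSq (hfun (volume.restrict (Ioo (0:ℝ) l)) E F ζ)
        + 2 * ((φ 0) * ((starRingEnd ℂ) (F ζ) *
            hfun (volume.restrict (Ioo (0:ℝ) l)) E F ζ)).re := by
    intro ζ
    rw [Complex.normSq_add]
    have e1' : Complex.normSq ((starRingEnd ℂ) (φ 0) * F ζ) = ‖φ 0‖^2 * ‖F ζ‖^2 := by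
      rw [Complex.normSq_mul, Complex.normSq_conj, Complex.normSq_eq_norm_sq, Complex.normSq_eq_norm_sq]
    have e2' : ((starRingEnd ℂ) (φ 0) * F ζ *
          (starRingEnd ℂ) (hfun (volume.restrict (Ioo (0:ℝ) l)) E F ζ)).re
        = ((φ 0) * ((starRingEnd ℂ) (F ζ) * hfun (volume.restrict (Ioo (0:ℝ) l)) E F ζ)).re := by
      have : (starRingEnd ℂ) (φ 0) * F ζ *
            (starRingEnd ℂ) (hfun (volume.restrict (Ioo (0:ℝ) l)) E F ζ)
          = (starRingEnd ℂ) ((φ 0) * ((starRingEnd ℂ) (F ζ) *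
              hfun (volume.restrict (Ioo (0:ℝ) l)) E F ζ)) := by
        simp only [map_mul, Complex.conj_conj]
        ring
      rw [this, Complex.conj_re]
    rw [e1', e2']
  have hkey : 0 ≤ ‖φ 0‖^2 * (∫ x, ‖F x‖^2 ∂(volume.restrict (Ioo (0:ℝ) l)))
      + ((∫ ζ, Complex.normSq (hfun (volume.restrict (Ioo (0:ℝ) l)) E F ζ)
          ∂(volume.restrict (Ioo (0:ℝ) l)))
        + 2 * ((φ 0) * ∫ ζ, (starRingEnd ℂ) (F ζ) * hfun (volume.restrict (Ioo (0:ℝ) l)) E F ζ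
          ∂(volume.restrict (Ioo (0:ℝ) l))).re) := by
    have h0 : 0 ≤ ∫ ζ, Complex.normSq ((starRingEnd ℂ) (φ 0) * F ζ
        + hfun (volume.restrict (Ioo (0:ℝ) l)) E F ζ) ∂(volume.restrict (Ioo (0:ℝ) l)) :=
      integral_nonneg fun ζ => Complex.normSq_nonneg _
    have hsplit : ∫ ζ, Complex.normSq ((starRingEnd ℂ) (φ 0) * F ζ
          + hfun (volume.restrict (Ioo (0:ℝ) l)) E F ζ) ∂(volume.restrict (Ioo (0:ℝ) l))
        = ‖φ 0‖^2 * (∫ x, ‖F x‖^2 ∂(volume.restrict (Ioo (0:ℝ) l)))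
          + ((∫ ζ, Complex.normSq (hfun (volume.restrict (Ioo (0:ℝ) l)) E F ζ)
              ∂(volume.restrict (Ioo (0:ℝ) l)))
            + 2 * ((φ 0) * ∫ ζ, (starRingEnd ℂ) (F ζ) *
                hfun (volume.restrict (Ioo (0:ℝ) l)) E F ζ
                ∂(volume.restrict (Ioo (0:ℝ) l))).re) := by
      have i1 : Integrable (fun ζ => ‖φ 0‖^2 * ‖F ζ‖^2
          + Complex.normSq (hfun (volume.restrict (Ioo (0:ℝ) l)) E F ζ))
          (volume.restrict (Ioo (0:ℝ) l)) := (hF2R.const_mul _).add hnormSqh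
      have i2 : Integrable (fun ζ => 2 * ((φ 0) * ((starRingEnd ℂ) (F ζ) *
          hfun (volume.restrict (Ioo (0:ℝ) l)) E F ζ)).re)
          (volume.restrict (Ioo (0:ℝ) l)) := (hintz.re).const_mul 2
      have i3 : Integrable (fun ζ => ‖φ 0‖^2 * ‖F ζ‖^2) (volume.restrict (Ioo (0:ℝ) l)) :=
        hF2R.const_mul _
      rw [integral_congr_ae (Filter.Eventually.of_forall hptwise)]
      rw [integral_add i1 i2, integral_add i3 hnormSqh,
        integral_const_mul, integral_const_mul, hzre, add_assoc]
    rw [hsplit] at h0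
    exact h0
  -- integrability of conj T2 * F
  have hTF : Integrable (fun x => (starRingEnd ℂ) (T2 (volume.restrict (Ioo (0:ℝ) l)) E F (φ 0) x)
      * F x) (volume.restrict (Ioo (0:ℝ) l)) := by
    have hWi : Integrable (fun p : ℝ × ℝ => wA (volume.restrict (Ioo (0:ℝ) l)) E F p
        + wB E F (φ 0) p + wC E F (φ 0) p)
        ((volume.restrict (Ioo (0:ℝ) l)).prod (volume.restrict (Ioo (0:ℝ) l))) :=
      ((wA_int hE hM hFm hF1).add (wB_int hE hM hFm hF1)).add (wC_int hE hM hFm hF1)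
    exact (hWi.integral_prod_left).congr
      (Filter.Eventually.of_forall fun x => (T2_pt x).symm)
  -- value of ∫ conj F * F
  have hFF : Integrable (fun x => (starRingEnd ℂ) (F x) * F x) (volume.restrict (Ioo (0:ℝ) l)) := by
    refine (hF2R.ofReal (𝕜 := ℂ)).congr (Filter.Eventually.of_forall fun x => ?_)
    beta_reduce
    rw [mul_comm, Complex.mul_conj, Complex.normSq_eq_norm_sq]
    norm_cast
  have hFFval : ∫ x, (starRingEnd ℂ) (F x) * F x ∂(volume.restrict (Ioo (0:ℝ) l))
      = ((∫ x, ‖F x‖^2 ∂(volume.restrict (Ioo (0:ℝ) l)) : ℝ) : ℂ) := by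
    calc ∫ x, (starRingEnd ℂ) (F x) * F x ∂(volume.restrict (Ioo (0:ℝ) l))
        = ∫ x, ((‖F x‖^2 : ℝ) : ℂ) ∂(volume.restrict (Ioo (0:ℝ) l)) := by
          refine integral_congr_ae (Filter.Eventually.of_forall fun x => ?_)
          beta_reduce
          rw [mul_comm, Complex.mul_conj, Complex.normSq_eq_norm_sq]
      _ = _ := integral_ofReal
  have hFFc : Integrable (fun x => ((1 : ℂ) + (‖φ 0‖ : ℂ)^2) * ((starRingEnd ℂ) (F x) * F x))
      (volume.restrict (Ioo (0:ℝ) l)) := hFF.const_mul _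
  have hcconj : (starRingEnd ℂ) ((1 : ℂ) + (‖φ 0‖ : ℂ)^2) = ((1 : ℂ) + (‖φ 0‖ : ℂ)^2) := by
    rw [map_add, map_one, map_pow, Complex.conj_ofReal]
  have hTOcong : (fun x => (starRingEnd ℂ) (((1 : ℂ) + (‖φ 0‖ : ℂ)^2) * F x +
        ∫ t in Ioo (0:ℝ) l, closeToDisplacementKernel l φ x t * F t) * F x)
      =ᵐ[volume.restrict (Ioo (0:ℝ) l)]
      (fun x => ((1 : ℂ) + (‖φ 0‖ : ℂ)^2) * ((starRingEnd ℂ) (F x) * F x)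
        + (starRingEnd ℂ) (T2 (volume.restrict (Ioo (0:ℝ) l)) E F (φ 0) x) * F x) := by
    filter_upwards [ae_restrict_mem measurableSet_Ioo] with x hx
    have hTeq : (∫ t in Ioo (0:ℝ) l, closeToDisplacementKernel l φ x t * F t)
        = T2 (volume.restrict (Ioo (0:ℝ) l)) E F (φ 0) x := by
      rw [T2]
      refine integral_congr_ae ?_
      filter_upwards [ae_restrict_mem measurableSet_Ioo] with t ht
      rw [hker x hx t ht]
    rw [hTeq, map_add, map_mul, hcconj, add_mul, mul_assoc]
  rw [integral_congr_ae hTOcong, integral_add hFFc hTF, integral_const_mul, hFFval]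
  have hr0 : 0 ≤ ∫ x, ‖F x‖^2 ∂(volume.restrict (Ioo (0:ℝ) l)) :=
    integral_nonneg fun x => sq_nonneg _
  rw [Complex.add_re, hre, Complex.mul_re]
  rw [show ((1 : ℂ) + (‖φ 0‖ : ℂ)^2).re = 1 + ‖φ 0‖^2 by simp [← Complex.ofReal_pow],
    show ((1 : ℂ) + (‖φ 0‖ : ℂ)^2).im = 0 by simp [← Complex.ofReal_pow],
    Complex.ofReal_re, Complex.ofReal_im]
  ring_nf
  nlinarith [hkey, hr0, sq_nonneg (‖φ 0‖)]

theorem skew_case_operator_geq_identity (l : ℝ) (hl : 0 < l) (φ : ℝ → ℂ)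
    (hφ : ContDiffOn ℝ 1 φ (Icc (0:ℝ) l))
    (A Astar S : Lp ℂ 2 (volume.restrict (Ioo (0:ℝ) l)) →L[ℂ] Lp ℂ 2 (volume.restrict (Ioo (0:ℝ) l)))
    (hA : ∀ f : Lp ℂ 2 (volume.restrict (Ioo (0:ℝ) l)),
      ⇑(A f) =ᵐ[volume.restrict (Ioo (0:ℝ) l)]
        fun x => -Complex.I * ∫ t in Ioo (0:ℝ) x, f t)
    (hAstar : ∀ f : Lp ℂ 2 (volume.restrict (Ioo (0:ℝ) l)),
      ⇑(Astar f) =ᵐ[volume.restrict (Ioo (0:ℝ) l)]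
        fun x => Complex.I * ∫ t in Ioo x l, f t)
    (hS : ∀ f : Lp ℂ 2 (volume.restrict (Ioo (0:ℝ) l)),
      ⇑(S f) =ᵐ[volume.restrict (Ioo (0:ℝ) l)]
        fun x => ((1 : ℂ) + (‖φ 0‖ : ℂ)^2) * f x +
          ∫ t in Ioo (0:ℝ) l, closeToDisplacementKernel l φ x t * f t)
    (hid : ∀ f : Lp ℂ 2 (volume.restrict (Ioo (0:ℝ) l)),
      (fun x => Complex.I * ((A (S f) - S (Astar f)) x))
        =ᵐ[volume.restrict (Ioo (0:ℝ) l)]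
      fun x => (φ x * ∫ t in Ioo (0:ℝ) l, (starRingEnd ℂ) (φ t) * f t) +
        ∫ t in Ioo (0:ℝ) l, f t) :
    ∀ f : Lp ℂ 2 (volume.restrict (Ioo (0:ℝ) l)),
      ((inner ℂ f f : ℂ)).re ≤ ((inner ℂ (S f) f : ℂ)).re := by
  intro f
  have hD : ContinuousOn (derivWithin φ (Icc (0:ℝ) l)) (Icc (0:ℝ) l) :=
    hφ.continuousOn_derivWithin (uniqueDiffOn_Icc hl) le_rfl
  have hclamp : Continuous (fun y : ℝ => max 0 (min y l)) :=
    continuous_const.max (continuous_id.min continuous_const)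
  have hclamp_mem : ∀ y : ℝ, max 0 (min y l) ∈ Icc (0:ℝ) l := by
    intro y
    constructor
    · exact le_max_left _ _
    · exact max_le hl.le (min_le_right _ _)
  have hE : Continuous (fun y => derivWithin φ (Icc (0:ℝ) l) (max 0 (min y l))) :=
    hD.comp_continuous hclamp hclamp_mem
  have hEeq : ∀ y ∈ Icc (0:ℝ) l, derivWithin φ (Icc (0:ℝ) l) y
      = (fun y => derivWithin φ (Icc (0:ℝ) l) (max 0 (min y l))) y := by
    intro y hy
    simp only []
    rw [min_eq_left hy.2, max_eq_right hy.1]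
  obtain ⟨M, hM⟩ : ∃ M : ℝ, ∀ y,
      ‖(fun y => derivWithin φ (Icc (0:ℝ) l) (max 0 (min y l))) y‖ ≤ M := by
    obtain ⟨M, hM⟩ := (isCompact_Icc (a := (0:ℝ)) (b := l)).exists_bound_of_continuousOn hD
    exact ⟨M, fun y => hM _ (hclamp_mem y)⟩
  have h1 : (inner ℂ f f : ℂ)
      = ∫ a, (starRingEnd ℂ) (f a) * (f a) ∂(volume.restrict (Ioo (0:ℝ) l)) :=
    by
      rw [MeasureTheory.L2.inner_def f f]
      refine integral_congr_ae (Filter.Eventually.of_forall fun a => ?_)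
      simp only [RCLike.inner_apply]
      ring
  have h2 : (inner ℂ (S f) f : ℂ)
      = ∫ a, (starRingEnd ℂ) ((S f) a) * (f a) ∂(volume.restrict (Ioo (0:ℝ) l)) :=
    by
      rw [MeasureTheory.L2.inner_def (S f) f]
      refine integral_congr_ae (Filter.Eventually.of_forall fun a => ?_)
      simp only [RCLike.inner_apply]
      ring
  have h3 : (inner ℂ (S f) f : ℂ) =
      ∫ x, (starRingEnd ℂ) (((1 : ℂ) + (‖φ 0‖ : ℂ)^2) * (f x) +
        ∫ t in Ioo (0:ℝ) l, closeToDisplacementKernel l φ x t * (f t)) * (f x)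
        ∂(volume.restrict (Ioo (0:ℝ) l)) := by
    rw [h2]
    refine integral_congr_ae ((hS f).mono fun x hx => ?_)
    simp only
    rw [hx]
  have h4 : (inner ℂ f f : ℂ)
      = ((∫ a, ‖f a‖^2 ∂(volume.restrict (Ioo (0:ℝ) l)) : ℝ) : ℂ) := by
    rw [h1]
    calc ∫ a, (starRingEnd ℂ) (f a) * (f a) ∂(volume.restrict (Ioo (0:ℝ) l))
        = ∫ a, ((‖f a‖^2 : ℝ) : ℂ) ∂(volume.restrict (Ioo (0:ℝ) l)) := by
          refine integral_congr_ae (Filter.Eventually.of_forall fun a => ?_)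
          simp [mul_comm ((starRingEnd ℂ) _), Complex.mul_conj, Complex.normSq_eq_norm_sq]
      _ = _ := integral_ofReal
  rw [h3, h4, Complex.ofReal_re]
  exact skew_main_aux l hl φ _ hE hEeq M hM (⇑f) (Lp.memLp f)
end
end
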